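/- arXiv:2311.07267 — 6 statements merged into one kernel-verified Lean document; each statement's English description precedes it below -/
import Mathlib

section
/- Let N ⊆ ℝ^m be a nonempty closed convex cone, let U₀ ⊆ ℝⁿ be open with x̄ ∈ U₀, and let F : U₀ → ℝ^m be continuously differentiable. If {DF(x̄)h − v : h ∈ ℝⁿ, v ∈ N} = ℝ^m, then there is a neighborhood U of x̄ such that {DF(x)h − v : h ∈ ℝⁿ, v ∈ N} = ℝ^m for every x ∈ U. -/
open Topology Filter

/-- A convex set that is dense in a finite-dimensional Euclidean space is the whole space. -/
lemma aux_dense_convex_eq_univ {m : ℕ} {s : Set (EuclideanSpace ℝ (Fin m))}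
    (hs : Convex ℝ s) (hd : closure s = Set.univ) : s = Set.univ := by
  have hclspan : IsClosed ((affineSpan ℝ s : Set (EuclideanSpace ℝ (Fin m)))) :=
    (affineSpan ℝ s).isClosed_direction_iff.mp
      (Submodule.closed_of_finiteDimensional _)
  have hspan : affineSpan ℝ s = ⊤ := by
    have h1 : closure s ⊆ (affineSpan ℝ s : Set (EuclideanSpace ℝ (Fin m))) :=
      hclspan.closure_subset_iff.mpr (subset_affineSpan ℝ s)
    rw [hd] at h1
    exact le_antisymm le_top fun p _ => h1 (Set.mem_univ p)
  obtain ⟨x₀, hx₀⟩ := hs.interior_nonempty_iff_affineSpan_eq_top.mpr hspan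
  ext y
  simp only [Set.mem_univ, iff_true]
  have h2 : (2 : ℝ) • y - x₀ ∈ closure s := by rw [hd]; trivial
  have h3 : (1 / 2 : ℝ) • x₀ + (1 / 2 : ℝ) • ((2 : ℝ) • y - x₀) ∈ interior s :=
    hs.combo_interior_closure_mem_interior hx₀ h2 (by norm_num) (by norm_num) (by norm_num)
  have h4 : (1 / 2 : ℝ) • x₀ + (1 / 2 : ℝ) • ((2 : ℝ) • y - x₀) = y := by
    module
  rw [h4] at h3
  exact interior_subset h3

/-- Iterated approximation: a set closed under addition containing 0 which
half-approximates every vector is dense. -/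
lemma aux_approx_dense {m : ℕ} {C : Set (EuclideanSpace ℝ (Fin m))}
    (h0 : (0 : EuclideanSpace ℝ (Fin m)) ∈ C)
    (hadd : ∀ u ∈ C, ∀ w ∈ C, u + w ∈ C)
    (happrox : ∀ y : EuclideanSpace ℝ (Fin m), ∃ z ∈ C, ‖y - z‖ ≤ (1 / 2) * ‖y‖) :
    closure C = Set.univ := by
  have key : ∀ k : ℕ, ∀ y : EuclideanSpace ℝ (Fin m),
      ∃ z ∈ C, ‖y - z‖ ≤ (1 / 2 : ℝ) ^ k * ‖y‖ := by
    intro k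
    induction k with
    | zero => intro y; exact ⟨0, h0, by simp⟩
    | succ k ih =>
      intro y
      obtain ⟨z₁, hz₁, hz₁e⟩ := happrox y
      obtain ⟨z₂, hz₂, hz₂e⟩ := ih (y - z₁)
      refine ⟨z₁ + z₂, hadd _ hz₁ _ hz₂, ?_⟩
      have : y - (z₁ + z₂) = (y - z₁) - z₂ := by abel
      rw [this]
      calc ‖(y - z₁) - z₂‖ ≤ (1 / 2 : ℝ) ^ k * ‖y - z₁‖ := hz₂e
        _ ≤ (1 / 2 : ℝ) ^ k * ((1 / 2) * ‖y‖) := by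
            apply mul_le_mul_of_nonneg_left hz₁e (by positivity)
        _ = (1 / 2 : ℝ) ^ (k + 1) * ‖y‖ := by ring
  apply Set.eq_univ_of_forall
  intro y
  rw [Metric.mem_closure_iff]
  intro ε hε
  obtain ⟨k, hk⟩ : ∃ k : ℕ, (1 / 2 : ℝ) ^ k * ‖y‖ < ε := by
    obtain ⟨k, hk⟩ := exists_pow_lt_of_lt_one (y := (1 / 2 : ℝ))
      (show 0 < ε / (‖y‖ + 1) by positivity) (by norm_num)
    refine ⟨k, ?_⟩
    have h1 : (1 / 2 : ℝ) ^ k * ‖y‖ ≤ (ε / (‖y‖ + 1)) * ‖y‖ := by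
      apply mul_le_mul_of_nonneg_right hk.le (norm_nonneg _)
    refine h1.trans_lt ?_
    rw [div_mul_eq_mul_div, div_lt_iff₀ (by positivity)]
    nlinarith [norm_nonneg y, hε]
  obtain ⟨z, hz, hze⟩ := key k y
  exact ⟨z, hz, lt_of_le_of_lt (by rw [dist_eq_norm]; exact hze) hk⟩

theorem stmt2 {n m : ℕ} (N : Set (EuclideanSpace ℝ (Fin m)))
    (hNne : N.Nonempty) (hNc : IsClosed N) (hNconv : Convex ℝ N)
    (hNcone : ∀ c : ℝ, 0 ≤ c → ∀ x ∈ N, c • x ∈ N)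
    (U₀ : Set (EuclideanSpace ℝ (Fin n))) (hU₀ : IsOpen U₀)
    (xbar : EuclideanSpace ℝ (Fin n)) (hxbar : xbar ∈ U₀)
    (F : EuclideanSpace ℝ (Fin n) → EuclideanSpace ℝ (Fin m))
    (F' : EuclideanSpace ℝ (Fin n) → (EuclideanSpace ℝ (Fin n) →L[ℝ] EuclideanSpace ℝ (Fin m)))
    (hF' : ∀ x ∈ U₀, HasFDerivAt F (F' x) x)
    (hF'cont : ContinuousOn F' U₀)
    (hCQ : {z | ∃ h, ∃ v ∈ N, z = F' xbar h - v} = Set.univ) :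
    ∃ U ∈ 𝓝 xbar, ∀ x ∈ U, {z | ∃ h, ∃ v ∈ N, z = F' x h - v} = Set.univ := by
  classical
  -- basic facts about N
  have h0N : (0 : EuclideanSpace ℝ (Fin m)) ∈ N := by
    obtain ⟨w, hw⟩ := hNne
    simpa using hNcone 0 le_rfl w hw
  have hNadd : ∀ u ∈ N, ∀ w ∈ N, u + w ∈ N := by
    intro u hu w hw
    have h1 : (1 / 2 : ℝ) • u + (1 / 2 : ℝ) • w ∈ N :=
      hNconv hu hw (by norm_num) (by norm_num) (by norm_num)
    have h2 := hNcone 2 (by norm_num) _ h1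
    have : (2 : ℝ) • ((1 / 2 : ℝ) • u + (1 / 2 : ℝ) • w) = u + w := by module
    rwa [this] at h2
  -- representations of arbitrary vectors at xbar
  have hrep : ∀ y : EuclideanSpace ℝ (Fin m), ∃ h v, v ∈ N ∧ y = F' xbar h - v := by
    intro y
    have : y ∈ {z | ∃ h, ∃ v ∈ N, z = F' xbar h - v} := by rw [hCQ]; trivial
    obtain ⟨h, v, hv, he⟩ := this
    exact ⟨h, v, hv, he⟩
  choose H V hVN hVe using hrep
  -- standard basis vectors
  set e : Fin m → EuclideanSpace ℝ (Fin m) := fun j => EuclideanSpace.single j (1 : ℝ) with he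
  set K : ℝ := ∑ j : Fin m, (‖H (e j)‖ + ‖H (-e j)‖) with hK
  have hK0 : 0 ≤ K := Finset.sum_nonneg fun j _ => by positivity
  -- coefficient functions
  set pos : ℝ → ℝ := fun t => max t 0 with hpos
  set neg : ℝ → ℝ := fun t => max (-t) 0 with hneg
  have hpos0 : ∀ t, 0 ≤ pos t := fun t => le_max_right _ _
  have hneg0 : ∀ t, 0 ≤ neg t := fun t => le_max_right _ _
  have hposneg : ∀ t, pos t - neg t = t := fun t => by
    simp only [hpos, hneg]
    rcases le_total t 0 with ht | ht
    · rw [max_eq_right ht, max_eq_left (by linarith)]; ring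
    · rw [max_eq_left ht, max_eq_right (by linarith)]; ring
  have hposle : ∀ t, pos t ≤ |t| := fun t => max_le (le_abs_self t) (abs_nonneg t)
  have hnegle : ∀ t, neg t ≤ |t| := fun t => max_le (neg_le_abs t) (abs_nonneg t)
  -- the combined preimage and cone-element for a given y
  set hh : EuclideanSpace ℝ (Fin m) → EuclideanSpace ℝ (Fin n) := fun y =>
    ∑ j : Fin m, (pos (y j) • H (e j) + neg (y j) • H (-e j)) with hhh
  set vv : EuclideanSpace ℝ (Fin m) → EuclideanSpace ℝ (Fin m) := fun y =>
    ∑ j : Fin m, (pos (y j) • V (e j) + neg (y j) • V (-e j)) with hvv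
  have hvvN : ∀ y, vv y ∈ N := by
    intro y
    apply Finset.sum_induction _ (· ∈ N) (fun a b ha hb => hNadd a ha b hb) h0N
    intro j _
    exact hNadd _ (hNcone _ (hpos0 _) _ (hVN (e j))) _ (hNcone _ (hneg0 _) _ (hVN (-e j)))
  -- key exact identity at any point x
  have hid : ∀ (x : EuclideanSpace ℝ (Fin n)) (y : EuclideanSpace ℝ (Fin m)),
      F' x (hh y) - vv y = (∑ j : Fin m, (y j) • e j)
        + ∑ j : Fin m, (pos (y j) • (F' x (H (e j)) - F' xbar (H (e j)))
            + neg (y j) • (F' x (H (-e j)) - F' xbar (H (-e j)))) := by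
    intro x y
    have hFe : ∀ j : Fin m, F' xbar (H (e j)) = e j + V (e j) :=
      fun j => (eq_sub_iff_add_eq.mp (hVe (e j))).symm
    have hFne : ∀ j : Fin m, F' xbar (H (-e j)) = -e j + V (-e j) :=
      fun j => (eq_sub_iff_add_eq.mp (hVe (-e j))).symm
    have hmap : F' x (hh y) = ∑ j : Fin m,
        (pos (y j) • F' x (H (e j)) + neg (y j) • F' x (H (-e j))) := by
      rw [hhh]
      simp [map_sum, map_add, map_smul]
    rw [hmap, hvv, ← Finset.sum_sub_distrib, ← Finset.sum_add_distrib]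
    apply Finset.sum_congr rfl
    intro j _
    rw [hFe j, hFne j]
    have h1 : pos (y j) - neg (y j) = y j := hposneg (y j)
    calc pos (y j) • F' x (H (e j)) + neg (y j) • F' x (H (-e j))
          - (pos (y j) • V (e j) + neg (y j) • V (-e j))
        = (pos (y j) - neg (y j)) • e j
          + (pos (y j) • (F' x (H (e j)) - (e j + V (e j)))
            + neg (y j) • (F' x (H (-e j)) - (-e j + V (-e j)))) := by
          module
      _ = y j • e j + (pos (y j) • (F' x (H (e j)) - (e j + V (e j)))
            + neg (y j) • (F' x (H (-e j)) - (-e j + V (-e j)))) := by rw [h1]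
  -- the basis expansion identity
  have hbasis : ∀ y : EuclideanSpace ℝ (Fin m), (∑ j : Fin m, (y j) • e j) = y := by
    intro y
    have h := (EuclideanSpace.basisFun (Fin m) ℝ).sum_repr y
    simp only [EuclideanSpace.basisFun_apply, EuclideanSpace.basisFun_repr] at h
    simpa [he] using h
  -- at xbar: exact representation
  have hxbarid : ∀ y : EuclideanSpace ℝ (Fin m), F' xbar (hh y) - vv y = y := by
    intro y
    rw [hid xbar y, hbasis y]
    simp
  -- choose the neighborhood
  have hcont : ContinuousAt F' xbar := hF'cont.continuousAt (hU₀.mem_nhds hxbar)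
  set δ : ℝ := (2 * (K + 1))⁻¹ with hδ
  have hδ0 : 0 < δ := by positivity
  have hball : Metric.ball (F' xbar) δ ∈ 𝓝 (F' xbar) := Metric.ball_mem_nhds _ hδ0
  have hpre : F' ⁻¹' Metric.ball (F' xbar) δ ∈ 𝓝 xbar := hcont.preimage_mem_nhds hball
  refine ⟨U₀ ∩ F' ⁻¹' Metric.ball (F' xbar) δ,
    Filter.inter_mem (hU₀.mem_nhds hxbar) hpre, ?_⟩
  rintro x ⟨hxU₀, hxball⟩
  set C : Set (EuclideanSpace ℝ (Fin m)) := {z | ∃ h, ∃ v ∈ N, z = F' x h - v} with hC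
  -- C contains 0
  have h0C : (0 : EuclideanSpace ℝ (Fin m)) ∈ C := ⟨0, 0, h0N, by simp⟩
  -- C is convex
  have hCconv : Convex ℝ C := by
    rintro z₁ ⟨h₁, v₁, hv₁, rfl⟩ z₂ ⟨h₂, v₂, hv₂, rfl⟩ a b ha hb hab
    refine ⟨a • h₁ + b • h₂, a • v₁ + b • v₂, hNconv hv₁ hv₂ ha hb hab, ?_⟩
    simp only [map_add, map_smul]
    module
  -- C is closed under nonnegative scaling, hence (with convexity) addition
  have hCsmul : ∀ c : ℝ, 0 ≤ c → ∀ z ∈ C, c • z ∈ C := by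
    rintro c hc z ⟨h, v, hv, rfl⟩
    exact ⟨c • h, c • v, hNcone c hc v hv, by simp only [map_smul]; module⟩
  have hCadd : ∀ u ∈ C, ∀ w ∈ C, u + w ∈ C := by
    intro u hu w hw
    have h1 : (1 / 2 : ℝ) • u + (1 / 2 : ℝ) • w ∈ C :=
      hCconv hu hw (by norm_num) (by norm_num) (by norm_num)
    have h2 := hCsmul 2 (by norm_num) _ h1
    have : (2 : ℝ) • ((1 / 2 : ℝ) • u + (1 / 2 : ℝ) • w) = u + w := by module
    rwa [this] at h2
  -- half-approximation property
  have happrox : ∀ y : EuclideanSpace ℝ (Fin m), ∃ z ∈ C, ‖y - z‖ ≤ (1 / 2) * ‖y‖ := by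
    intro y
    refine ⟨F' x (hh y) - vv y, ⟨hh y, vv y, hvvN y, rfl⟩, ?_⟩
    have hdiff : y - (F' x (hh y) - vv y) = (F' xbar - F' x) (hh y) := by
      calc y - (F' x (hh y) - vv y)
          = (F' xbar (hh y) - vv y) - (F' x (hh y) - vv y) := by rw [hxbarid y]
        _ = F' xbar (hh y) - F' x (hh y) := by abel
        _ = (F' xbar - F' x) (hh y) := (ContinuousLinearMap.sub_apply _ _ _).symm
    rw [hdiff]
    have hnorm1 : ‖(F' xbar - F' x) (hh y)‖ ≤ ‖F' xbar - F' x‖ * ‖hh y‖ :=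
      (F' xbar - F' x).le_opNorm _
    have hFx : ‖F' xbar - F' x‖ ≤ δ := by
      rw [← dist_eq_norm, dist_comm]
      exact le_of_lt (Metric.mem_ball.mp hxball)
    have hcoord : ∀ j : Fin m, |y j| ≤ ‖y‖ := by
      intro j
      rw [EuclideanSpace.norm_eq]
      calc |y j| = Real.sqrt (‖y j‖ ^ 2) := by
            rw [Real.sqrt_sq (norm_nonneg _), Real.norm_eq_abs]
        _ ≤ Real.sqrt (∑ i : Fin m, ‖y i‖ ^ 2) := by
            apply Real.sqrt_le_sqrt
            exact Finset.single_le_sum (fun i _ => sq_nonneg ‖y i‖) (Finset.mem_univ j)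
    have hhnorm : ‖hh y‖ ≤ K * ‖y‖ := by
      rw [hhh]
      calc ‖∑ j : Fin m, (pos (y j) • H (e j) + neg (y j) • H (-e j))‖
          ≤ ∑ j : Fin m, ‖pos (y j) • H (e j) + neg (y j) • H (-e j)‖ :=
            norm_sum_le _ _
        _ ≤ ∑ j : Fin m, (pos (y j) * ‖H (e j)‖ + neg (y j) * ‖H (-e j)‖) := by
            apply Finset.sum_le_sum
            intro j _
            calc ‖pos (y j) • H (e j) + neg (y j) • H (-e j)‖
                ≤ ‖pos (y j) • H (e j)‖ + ‖neg (y j) • H (-e j)‖ := norm_add_le _ _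
              _ = pos (y j) * ‖H (e j)‖ + neg (y j) * ‖H (-e j)‖ := by
                  rw [norm_smul, norm_smul, Real.norm_eq_abs, Real.norm_eq_abs,
                    abs_of_nonneg (hpos0 _), abs_of_nonneg (hneg0 _)]
        _ ≤ ∑ j : Fin m, ‖y‖ * (‖H (e j)‖ + ‖H (-e j)‖) := by
            apply Finset.sum_le_sum
            intro j _
            have h1 : pos (y j) ≤ ‖y‖ := (hposle _).trans (hcoord j)
            have h2 : neg (y j) ≤ ‖y‖ := (hnegle _).trans (hcoord j)
            have := add_le_add (mul_le_mul_of_nonneg_right h1 (norm_nonneg (H (e j))))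
              (mul_le_mul_of_nonneg_right h2 (norm_nonneg (H (-e j))))
            calc pos (y j) * ‖H (e j)‖ + neg (y j) * ‖H (-e j)‖
                ≤ ‖y‖ * ‖H (e j)‖ + ‖y‖ * ‖H (-e j)‖ := this
              _ = ‖y‖ * (‖H (e j)‖ + ‖H (-e j)‖) := by ring
        _ = K * ‖y‖ := by rw [hK, ← Finset.mul_sum, mul_comm]
    have hδK : δ * K ≤ 1 / 2 := by
      rw [hδ]
      rw [inv_mul_le_iff₀ (by positivity)]
      nlinarith
    calc ‖(F' xbar - F' x) (hh y)‖ ≤ ‖F' xbar - F' x‖ * ‖hh y‖ := hnorm1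
      _ ≤ δ * (K * ‖y‖) := by
          apply mul_le_mul hFx hhnorm (norm_nonneg _) hδ0.le
      _ = (δ * K) * ‖y‖ := (mul_assoc _ _ _).symm
      _ ≤ (1 / 2) * ‖y‖ := mul_le_mul_of_nonneg_right hδK (norm_nonneg y)
  have hdense := aux_approx_dense h0C hCadd happrox
  exact aux_dense_convex_eq_univ hCconv hdense
end

section
/- Let Q ⊆ ℝ^m be a nonempty closed convex set, let λ̄ ∈ Q, and let A : ℝⁿ → ℝ^m be a linear map such that {Ah − v : h ∈ ℝⁿ, v ∈ N_Q(λ̄)} = ℝ^m. If λ ∈ Q satisfies Aᵀλ = Aᵀλ̄, then λ = λ̄. -/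
open scoped InnerProductSpace

/-- The normal cone of a convex set `Q ⊆ ℝ^m` at a point `lam ∈ Q`. -/
def normalCone {m : ℕ} (Q : Set (EuclideanSpace ℝ (Fin m))) (lam : EuclideanSpace ℝ (Fin m)) :
    Set (EuclideanSpace ℝ (Fin m)) :=
  {v | ∀ y ∈ Q, ⟪v, y - lam⟫_ℝ ≤ 0}

theorem stmt4 {n m : ℕ} (Q : Set (EuclideanSpace ℝ (Fin m)))
    (hQne : Q.Nonempty) (hQc : IsClosed Q) (hQconv : Convex ℝ Q)
    (lambar : EuclideanSpace ℝ (Fin m)) (hlambar : lambar ∈ Q)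
    (A : EuclideanSpace ℝ (Fin n) →L[ℝ] EuclideanSpace ℝ (Fin m))
    (hCQ : {z | ∃ h, ∃ v ∈ normalCone Q lambar, z = A h - v} = Set.univ)
    (lam : EuclideanSpace ℝ (Fin m)) (hlam : lam ∈ Q)
    (hAdj : ContinuousLinearMap.adjoint A lam = ContinuousLinearMap.adjoint A lambar) :
    lam = lambar := by
  have hz : (lambar - lam) ∈ {z | ∃ h, ∃ v ∈ normalCone Q lambar, z = A h - v} := by
    rw [hCQ]; trivial
  obtain ⟨h, v, hv, hzv⟩ := hz
  have h1 : ⟪lambar - lam, A h⟫_ℝ = 0 := by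
    rw [← ContinuousLinearMap.adjoint_inner_left]
    have : ContinuousLinearMap.adjoint A (lambar - lam) = 0 := by
      rw [map_sub, hAdj, sub_self]
    rw [this, inner_zero_left]
  have h2 : ⟪v, lam - lambar⟫_ℝ ≤ 0 := hv lam hlam
  have hvv : ⟪lambar - lam, v⟫_ℝ = - ⟪v, lam - lambar⟫_ℝ := by
    rw [real_inner_comm, ← inner_neg_right, neg_sub]
  have key : ‖lambar - lam‖ ^ 2 ≤ 0 := by
    have := real_inner_self_eq_norm_sq (lambar - lam)
    rw [← this]
    nth_rewrite 2 [hzv]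
    rw [inner_sub_right, h1, hvv]
    linarith
  have : lambar - lam = 0 := by
    have := norm_nonneg (lambar - lam)
    have h0 : ‖lambar - lam‖ = 0 := by nlinarith
    exact norm_eq_zero.mp h0
  exact (sub_eq_zero.mp this).symm
end

section
/- Let N ⊆ ℝ^m be a nonempty closed convex cone and let A : ℝⁿ → ℝ^m be a linear map such that {Ah − v : h ∈ ℝⁿ, v ∈ N} = ℝ^m. Then the range of A intersects the relative interior of N, i.e., A(ℝⁿ) ∩ ri(N) ≠ ∅. -/
open Set

/-- Monotonicity of intrinsic interior under equal affine spans. -/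
theorem intrinsicInterior_mono_of_affineSpan_eq {V : Type*} [NormedAddCommGroup V]
    [NormedSpace ℝ V] {s t : Set V} (hst : s ⊆ t)
    (hspan : affineSpan ℝ s = affineSpan ℝ t) :
    intrinsicInterior ℝ s ⊆ intrinsicInterior ℝ t := by
  rw [intrinsicInterior, intrinsicInterior, hspan]
  exact image_mono (interior_mono (preimage_mono hst))

theorem stmt9 {n m : ℕ} (N : Set (EuclideanSpace ℝ (Fin m)))
    (hNne : N.Nonempty) (hNc : IsClosed N) (hNconv : Convex ℝ N)
    (hNcone : ∀ c : ℝ, 0 ≤ c → ∀ x ∈ N, c • x ∈ N)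
    (A : EuclideanSpace ℝ (Fin n) →L[ℝ] EuclideanSpace ℝ (Fin m))
    (hCQ : {z | ∃ h, ∃ v ∈ N, z = A h - v} = Set.univ) :
    (Set.range A ∩ intrinsicInterior ℝ N).Nonempty := by
  -- 0 ∈ N
  obtain ⟨x0, hx0⟩ := hNne
  have h0 : (0 : EuclideanSpace ℝ (Fin m)) ∈ N := by
    simpa using hNcone 0 le_rfl x0 hx0
  -- pick a point in the intrinsic interior
  obtain ⟨d, hd⟩ := Set.Nonempty.intrinsicInterior hNconv ⟨x0, hx0⟩
  -- use hypothesis hCQ at d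
  have hdmem : d ∈ {z | ∃ h, ∃ v ∈ N, z = A h - v} := by rw [hCQ]; trivial
  obtain ⟨h, v, hv, hdv⟩ := hdmem
  have hAh : A h = v + d := by rw [hdv]; abel
  -- N + v ⊆ N
  have hadd : ∀ x ∈ N, v + x ∈ N := by
    intro x hx
    have hmid : (1/2 : ℝ) • v + (1/2 : ℝ) • x ∈ N :=
      hNconv hv hx (by norm_num) (by norm_num) (by norm_num)
    have := hNcone 2 (by norm_num) _ hmid
    have heq : (2 : ℝ) • ((1/2 : ℝ) • v + (1/2 : ℝ) • x) = v + x := by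
      rw [smul_add, smul_smul, smul_smul]; norm_num
    rwa [heq] at this
  -- v is in the direction of the affine span of N
  have hvN : v ∈ affineSpan ℝ N := subset_affineSpan ℝ N hv
  have h0N : (0 : EuclideanSpace ℝ (Fin m)) ∈ affineSpan ℝ N := subset_affineSpan ℝ N h0
  -- affineSpan of (v + N) equals affineSpan of N
  have hspan : affineSpan ℝ ((v + ·) '' N) = affineSpan ℝ N := by
    apply le_antisymm
    · rw [affineSpan_le]
      rintro _ ⟨x, hx, rfl⟩
      have hxN : x ∈ affineSpan ℝ N := subset_affineSpan ℝ N hx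
      have hdir : v ∈ (affineSpan ℝ N).direction := by
        simpa using AffineSubspace.vsub_mem_direction hvN h0N
      have := AffineSubspace.vadd_mem_of_mem_direction hdir hxN
      simpa using this
    · rw [affineSpan_le]
      intro x hx
      have h1 : v + x ∈ affineSpan ℝ ((v + ·) '' N) :=
        subset_affineSpan ℝ _ ⟨x, hx, rfl⟩
      have h2 : v + 0 ∈ affineSpan ℝ ((v + ·) '' N) :=
        subset_affineSpan ℝ _ ⟨0, h0, rfl⟩
      have h3 : v + v ∈ affineSpan ℝ ((v + ·) '' N) :=
        subset_affineSpan ℝ _ ⟨v, hv, rfl⟩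
      have hdir : -v ∈ (affineSpan ℝ ((v + ·) '' N)).direction := by
        have := AffineSubspace.vsub_mem_direction h2 h3
        simpa using this
      have := AffineSubspace.vadd_mem_of_mem_direction hdir h1
      simpa using this
  -- translate the intrinsic interior
  have htrans : intrinsicInterior ℝ ((v + ·) '' N) = (v + ·) '' intrinsicInterior ℝ N := by
    have := (AffineIsometryEquiv.constVAdd ℝ (EuclideanSpace ℝ (Fin m))
      v).toAffineIsometry.image_intrinsicInterior N
    simpa [AffineIsometryEquiv.coe_constVAdd, vadd_eq_add] using this
  have hvd : v + d ∈ intrinsicInterior ℝ N := by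
    apply intrinsicInterior_mono_of_affineSpan_eq
      (fun z hz => by obtain ⟨x, hx, rfl⟩ := hz; exact hadd x hx) hspan
    rw [htrans]
    exact ⟨d, hd, rfl⟩
  exact ⟨A h, ⟨h, rfl⟩, by rw [hAh]; exact hvd⟩
end

section
/- Let N ⊆ ℝ^m be a nonempty closed convex cone and let A : ℝⁿ → ℝ^m be a linear map such that {Ah − v : h ∈ ℝⁿ, v ∈ N} = ℝ^m. If the preimage A⁻¹(N) is a linear subspace of ℝⁿ, then N is a linear subspace of ℝ^m. -/
theorem stmt10 {n m : ℕ} (N : Set (EuclideanSpace ℝ (Fin m)))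
    (hNne : N.Nonempty) (hNc : IsClosed N) (hNconv : Convex ℝ N)
    (hNcone : ∀ c : ℝ, 0 ≤ c → ∀ x ∈ N, c • x ∈ N)
    (A : EuclideanSpace ℝ (Fin n) →L[ℝ] EuclideanSpace ℝ (Fin m))
    (hCQ : {z | ∃ h, ∃ v ∈ N, z = A h - v} = Set.univ)
    (hpre : ∃ S : Submodule ℝ (EuclideanSpace ℝ (Fin n)), (S : Set (EuclideanSpace ℝ (Fin n))) = A ⁻¹' N) :
    ∃ T : Submodule ℝ (EuclideanSpace ℝ (Fin m)), (T : Set (EuclideanSpace ℝ (Fin m))) = N := by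
  obtain ⟨S, hS⟩ := hpre
  obtain ⟨x0, hx0⟩ := hNne
  have h0 : (0 : EuclideanSpace ℝ (Fin m)) ∈ N := by
    have := hNcone 0 le_rfl x0 hx0
    simpa using this
  -- closed under addition
  have hadd : ∀ x ∈ N, ∀ y ∈ N, x + y ∈ N := by
    intro x hx y hy
    have hmid : (1/2 : ℝ) • x + (1/2 : ℝ) • y ∈ N :=
      hNconv hx hy (by norm_num) (by norm_num) (by norm_num)
    have := hNcone 2 (by norm_num) _ hmid
    have h2 : (2:ℝ) • ((1/2 : ℝ) • x + (1/2 : ℝ) • y) = x + y := by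
      rw [smul_add, smul_smul, smul_smul]; norm_num
    rwa [h2] at this
  -- closed under negation
  have hneg : ∀ v ∈ N, -v ∈ N := by
    intro v hv
    have : v ∈ {z | ∃ h, ∃ w ∈ N, z = A h - w} := by rw [hCQ]; trivial
    obtain ⟨h, w, hw, hvw⟩ := this
    have hAh : A h ∈ N := by
      have : A h = v + w := by rw [hvw]; abel
      rw [this]; exact hadd v hv w hw
    have hhS : h ∈ S := by rw [← Set.mem_preimage, ← hS] at hAh; exact hAh
    have hnegh : -h ∈ S := S.neg_mem hhS
    have hAnegh : A (-h) ∈ N := by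
      have := hnegh
      rw [← SetLike.mem_coe, hS, Set.mem_preimage] at this
      exact this
    have : -(v + w) ∈ N := by
      have hA : A (-h) = -(v+w) := by rw [map_neg, hvw]; abel_nf
      rwa [hA] at hAnegh
    have := hadd _ this w hw
    have heq : -(v+w) + w = -v := by abel
    rwa [heq] at this
  refine ⟨{ carrier := N,
            add_mem' := fun {a b} ha hb => hadd a ha b hb,
            zero_mem' := h0,
            smul_mem' := ?_ }, rfl⟩
  intro c x hx
  rcases le_or_gt 0 c with hc | hc
  · exact hNcone c hc x hx
  · have : c • x = (-c) • (-x) := by simp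
    rw [this]
    exact hNcone (-c) (by linarith) _ (hneg x hx)
end

section
/- Let S ⊆ ℝⁿ be C²-pointed at s̄ ∈ S with respect to (G, K): that is, K ⊆ ℝ^m is closed and convex with T_K(G(s̄)) ∩ (−T_K(G(s̄))) = {0}, U is an open neighborhood of s̄, G : U → ℝⁿ → ℝ^m is twice continuously differentiable on U with DG(s̄) surjective, and S ∩ U = {s ∈ U : G(s) ∈ K}. Then: (a) for every sequence s_k ∈ S with s_k → s̄, the subspaces ker(DG(s_k)) converge to ker(DG(s̄)) in the Painlevé–Kuratowski sense; and (b) there exist δ > 0, M > 0 and a neighborhood V of s̄ such that for every s ∈ S ∩ V and every v ∈ ker(DG(s)) with ‖v‖ = 1 there exists a map r : [0,δ] → ℝⁿ with ‖r(t)‖ ≤ M and s + t v + (t²/2) r(t) ∈ S for all t ∈ [0,δ]. -/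
open Filter Topology Set
open scoped Pointwise

/-- The tangent cone of a convex set `K` at `y`: the closure of `⋃_{t>0} t • (K - y)`. -/
def tangentConeSet {m : ℕ} (K : Set (EuclideanSpace ℝ (Fin m))) (y : EuclideanSpace ℝ (Fin m)) :
    Set (EuclideanSpace ℝ (Fin m)) :=
  closure (⋃ t ∈ Set.Ioi (0 : ℝ), t • ((fun z => z - y) '' K))

/-- Painlevé–Kuratowski convergence of a sequence of sets to a limit set. -/
def PKConv {E : Type*} [TopologicalSpace E] (S : ℕ → Set E) (L : Set E) : Prop :=
  (∀ x ∈ L, ∃ u : ℕ → E, (∀ k, u k ∈ S k) ∧ Tendsto u atTop (𝓝 x)) ∧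
  (∀ u : ℕ → E, (∀ k, u k ∈ S k) → ∀ p, MapClusterPt p atTop u → p ∈ L)


/-!
By the open mapping theorem `DG(s̄)` has a bounded nonlinear right inverse, so any map that
`ApproximatesLinearOn` `DG(s̄)` with a small enough constant is locally onto with linear control
of the preimage (Lyusternik–Graves). For the linear maps `DG(s_k) → DG(s̄)` this puts, next to each
`x ∈ ker DG(s̄)`, a point of `ker DG(s_k)` at distance `O(‖DG(s_k) x‖)`; cluster points of kernel
sequences lie in `ker DG(s̄)` by continuity of evaluation. For `G` itself near `s̄` it corrects
`s + t v` to a point `x` with `G x = G s ∈ K`, hence `x ∈ S`, and the correction is `O(t²)` because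
`DG(s) v = 0` and `DG` is Lipschitz, so `‖G (s + t v) - G s‖ = O(t²)`.
-/

open Metric
open scoped NNReal

variable {E F : Type*} [NormedAddCommGroup E] [NormedSpace ℝ E]
  [NormedAddCommGroup F] [NormedSpace ℝ F]

theorem Convex.norm_image_sub_sub_fderiv_le_of_lipschitzOnWith {D : Set E} (hD : Convex ℝ D)
    {G : E → F} {G' : E → E →L[ℝ] F} {C : ℝ≥0} (hG : ∀ x ∈ D, HasFDerivAt G (G' x) x)
    (hlip : LipschitzOnWith C G' D) {x y : E} (hx : x ∈ D) (hy : y ∈ D) :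
    ‖G y - G x - G' x (y - x)‖ ≤ C * ‖y - x‖ ^ 2 := by
  have hseg : segment ℝ x y ⊆ D := hD.segment_subset hx hy
  have bound : ∀ z ∈ segment ℝ x y, ‖G' z - G' x‖ ≤ C * ‖y - x‖ := by
    intro z hz
    have hzx : dist z x ≤ dist y x := by
      have := dist_add_dist_of_mem_segment hz
      rw [dist_comm x z, dist_comm x y] at this
      linarith [dist_nonneg (x := z) (y := y)]
    calc ‖G' z - G' x‖ = dist (G' z) (G' x) := (dist_eq_norm _ _).symm
      _ ≤ C * dist z x := hlip.dist_le_mul z (hseg hz) x hx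
      _ ≤ C * ‖y - x‖ := by rw [← dist_eq_norm]; gcongr
  calc ‖G y - G x - G' x (y - x)‖ ≤ C * ‖y - x‖ * ‖y - x‖ :=
        (convex_segment x y).norm_image_sub_le_of_norm_hasFDerivWithin_le'
          (fun z hz => (hG z (hseg hz)).hasFDerivWithinAt) bound
          (left_mem_segment ℝ x y) (right_mem_segment ℝ x y)
    _ = C * ‖y - x‖ ^ 2 := by ring

theorem ContinuousLinearMap.approximatesLinearOn (A B : E →L[ℝ] F) (s : Set E) :
    ApproximatesLinearOn A B s ‖A - B‖₊ := by
  intro x _ y _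
  have : A x - A y - B (x - y) = (A - B) (x - y) := by simp only [map_sub, sub_apply]; abel
  rw [this]
  exact (A - B).le_opNorm (x - y)

theorem ApproximatesLinearOn.exists_eq_of_closedBall_subset [CompleteSpace E] {f : E → F}
    {f' : E →L[ℝ] F} {V : Set E} (f'symm : f'.NonlinearRightInverse) (hpos : 0 < f'symm.nnnorm)
    (hf : ApproximatesLinearOn f f' V (f'symm.nnnorm⁻¹ / 2)) {b : E} {y : F}
    (hb : closedBall b (2 * f'symm.nnnorm * ‖y - f b‖) ⊆ V) :
    ∃ x, f x = y ∧ dist x b ≤ 2 * f'symm.nnnorm * ‖y - f b‖ := by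
  have hy : y ∈ closedBall (f b)
      (((f'symm.nnnorm : ℝ)⁻¹ - ((f'symm.nnnorm⁻¹ / 2 : ℝ≥0) : ℝ)) *
        (2 * f'symm.nnnorm * ‖y - f b‖)) := by
    have hpos' : (0 : ℝ) < f'symm.nnnorm := hpos
    rw [mem_closedBall, dist_eq_norm]
    apply le_of_eq
    push_cast
    field_simp
    ring
  obtain ⟨x, hx, hfx⟩ :=
    hf.surjOn_closedBall_of_nonlinearRightInverse f'symm (by positivity) hb hy
  exact ⟨x, hfx, hx⟩

theorem mem_ker_of_mapClusterPt {A : ℕ → E →L[ℝ] F} {A₀ : E →L[ℝ] F}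
    (hA : Tendsto A atTop (𝓝 A₀)) {u : ℕ → E} (hu : ∀ k, A k (u k) = 0) {p : E}
    (hp : MapClusterPt p atTop u) : A₀ p = 0 := by
  obtain ⟨φ, hφ, hup⟩ := hp.tendsto_subseq
  have hlim : Tendsto (fun j => A (φ j) (u (φ j))) atTop (𝓝 (A₀ p)) :=
    (isBoundedBilinearMap_apply.continuous.tendsto _).comp
      ((hA.comp hφ.tendsto_atTop).prodMk_nhds hup)
  simp only [hu] at hlim
  exact tendsto_nhds_unique hlim tendsto_const_nhds

section Kernels

variable [CompleteSpace E] [CompleteSpace F]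

theorem exists_tendsto_of_mem_ker_of_tendsto {A : ℕ → E →L[ℝ] F} {A₀ : E →L[ℝ] F}
    (hA : Tendsto A atTop (𝓝 A₀)) (hsurj : Function.Surjective A₀) {x : E} (hx : A₀ x = 0) :
    ∃ u : ℕ → E, (∀ k, A k (u k) = 0) ∧ Tendsto u atTop (𝓝 x) := by
  obtain ⟨f'symm, hpos⟩ :=
    A₀.exists_nonlinearRightInverse_of_surjective (LinearMap.range_eq_top.2 hsurj)
  set c : ℝ≥0 := f'symm.nnnorm
  have hsolve : ∀ k, ∃ w, A k w = 0 ∧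
      (‖A k - A₀‖₊ ≤ c⁻¹ / 2 → dist w x ≤ 2 * c * ‖A k x‖) := by
    intro k
    by_cases hk : ‖A k - A₀‖₊ ≤ c⁻¹ / 2
    · obtain ⟨w, hw, hdist⟩ := (((A k).approximatesLinearOn A₀ univ).mono_num hk
        ).exists_eq_of_closedBall_subset f'symm hpos (b := x) (y := 0) (subset_univ _)
      exact ⟨w, hw, fun _ => by simpa using hdist⟩
    · exact ⟨0, map_zero _, fun h => absurd h hk⟩
  choose u hu hdist using hsolve
  refine ⟨u, hu, tendsto_iff_dist_tendsto_zero.2 ?_⟩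
  have hAx : Tendsto (fun k => 2 * c * ‖A k x‖) atTop (𝓝 0) := by
    have h := (((ContinuousLinearMap.apply ℝ F x).continuous.tendsto A₀).comp hA).norm
    simpa [hx] using h.const_mul (2 * (c : ℝ))
  have hclose : ∀ᶠ k in atTop, ‖A k - A₀‖₊ ≤ c⁻¹ / 2 := by
    have h := tendsto_iff_norm_sub_tendsto_zero.1 hA
    filter_upwards [h.eventually (ge_mem_nhds (show (0 : ℝ) < (c⁻¹ / 2 : ℝ≥0) by
      positivity))] with k hk
    exact_mod_cast hk
  exact squeeze_zero' (Eventually.of_forall fun k => dist_nonneg)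
    (hclose.mono fun k hk => hdist k hk) hAx

theorem pkConv_ker_of_tendsto {A : ℕ → E →L[ℝ] F} {A₀ : E →L[ℝ] F}
    (hA : Tendsto A atTop (𝓝 A₀)) (hsurj : Function.Surjective A₀) :
    PKConv (fun k => (LinearMap.ker (A k : E →ₗ[ℝ] F) : Set E))
      (LinearMap.ker (A₀ : E →ₗ[ℝ] F) : Set E) :=
  ⟨fun _ hx => exists_tendsto_of_mem_ker_of_tendsto hA hsurj hx,
    fun _ hu _ hp => mem_ker_of_mapClusterPt hA hu hp⟩

end Kernels

theorem exists_remainder_of_norm_le_mul_sq {S : Set E} {s v : E} {δ M : ℝ} (hM : 0 ≤ M)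
    (h : ∀ t ∈ Icc 0 δ, ∃ x ∈ S, ‖x - (s + t • v)‖ ≤ M * t ^ 2) :
    ∃ r : ℝ → E, ∀ t ∈ Icc 0 δ, ‖r t‖ ≤ 2 * M ∧ s + t • v + (t ^ 2 / 2) • r t ∈ S := by
  choose! x hxS hx using h
  refine ⟨fun t => (2 / t ^ 2) • (x t - (s + t • v)), fun t ht => ?_⟩
  rcases eq_or_ne t 0 with rfl | ht0
  · have hx0 : x 0 = s := by simpa [sub_eq_zero] using hx 0 ht
    exact ⟨by simpa using hM, by simpa [hx0] using hxS 0 ht⟩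
  have hcoef : 0 < 2 / t ^ 2 := by positivity
  refine ⟨?_, ?_⟩
  · calc ‖(2 / t ^ 2) • (x t - (s + t • v))‖ ≤ 2 / t ^ 2 * (M * t ^ 2) := by
          rw [norm_smul, Real.norm_of_nonneg hcoef.le]; gcongr; exact hx t ht
      _ = 2 * M := by field_simp
  · convert hxS t ht using 1
    rw [smul_smul, show t ^ 2 / 2 * (2 / t ^ 2) = 1 by field_simp, one_smul]
    abel

theorem exists_eq_near_add_smul_of_mem_ker [CompleteSpace E] [CompleteSpace F]
    {G : E → F} {G' : E → E →L[ℝ] F} {V : Set E} {sbar : E} {C : ℝ≥0}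
    (hV : V ∈ 𝓝 sbar) (hG : ∀ x ∈ V, HasFDerivAt G (G' x) x) (hlip : LipschitzOnWith C G' V)
    (hsurj : Function.Surjective (G' sbar)) :
    ∃ δ > (0 : ℝ), ∃ M > (0 : ℝ), ∃ W ∈ 𝓝 sbar, ∀ s ∈ W, ∀ v, G' s v = 0 → ‖v‖ ≤ 1 →
      ∀ t ∈ Icc (0 : ℝ) δ, ∃ x ∈ V, G x = G s ∧ ‖x - (s + t • v)‖ ≤ M * t ^ 2 := by
  obtain ⟨f'symm, hpos⟩ :=
    (G' sbar).exists_nonlinearRightInverse_of_surjective (LinearMap.range_eq_top.2 hsurj)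
  set c : ℝ≥0 := f'symm.nnnorm
  have hstrict : HasStrictFDerivAt G (G' sbar) sbar :=
    hasStrictFDerivAt_of_hasFDerivAt_of_continuousAt (eventually_of_mem hV hG)
      (hlip.continuousOn.continuousAt hV)
  obtain ⟨V₁, hV₁, happrox⟩ :=
    hstrict.approximates_deriv_on_nhds (c := c⁻¹ / 2) (Or.inr (by positivity))
  obtain ⟨ρ, hρ, hball⟩ := Metric.mem_nhds_iff.1 (inter_mem hV hV₁)
  set M : ℝ := 2 * c * (C + 1)
  have hM : 0 < M := by positivity
  set δ : ℝ := min 1 (ρ / (2 * (M + 1)))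
  refine ⟨δ, by positivity, M, hM, ball sbar (ρ / 2), ball_mem_nhds _ (by positivity), ?_⟩
  rintro s hs v hv hv1 t ⟨ht0, htδ⟩
  set b := s + t • v
  have hbs : dist b s ≤ t := by
    rw [dist_eq_norm, add_sub_cancel_left, norm_smul, Real.norm_of_nonneg ht0]
    exact mul_le_of_le_one_right ht0 hv1
  have hsmall : t + M * t ^ 2 ≤ ρ / 2 := by
    have htρ : t * (2 * (M + 1)) ≤ ρ :=
      (le_div_iff₀ (by positivity)).1 (htδ.trans (min_le_right _ _))
    have hsq : M * t ^ 2 ≤ M * t :=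
      mul_le_mul_of_nonneg_left (by nlinarith [htδ.trans (min_le_left _ _)]) hM.le
    nlinarith
  have hsρ : dist s sbar < ρ / 2 := mem_ball.1 hs
  have hD : ball sbar ρ ⊆ V := hball.trans inter_subset_left
  have hGb : ‖G s - G b‖ ≤ C * t ^ 2 := by
    have h := (convex_ball sbar ρ).norm_image_sub_sub_fderiv_le_of_lipschitzOnWith
      (fun x hx => hG x (hD hx)) (hlip.mono hD) (mem_ball.2 (by linarith)) (y := b)
      (mem_ball.2 (by nlinarith [dist_triangle b s sbar, mul_nonneg hM.le (sq_nonneg t)]))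
    rw [← dist_eq_norm b s] at h
    rw [norm_sub_rev]
    simpa [b, hv] using h.trans (by gcongr)
  have hcorr : 2 * c * ‖G s - G b‖ ≤ M * t ^ 2 :=
    calc 2 * c * ‖G s - G b‖ ≤ 2 * c * (C * t ^ 2) := by gcongr
      _ ≤ M * t ^ 2 := by nlinarith [sq_nonneg t, c.coe_nonneg]
  have hsub : closedBall b (2 * c * ‖G s - G b‖) ⊆ ball sbar ρ := fun z hz => by
    rw [mem_closedBall] at hz
    exact mem_ball.2 (by linarith [dist_triangle4 z b s sbar])
  obtain ⟨x, hGx, hx⟩ := (happrox.mono_set (hball.trans inter_subset_right)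
    ).exists_eq_of_closedBall_subset f'symm hpos hsub
  exact ⟨x, hD (hsub (mem_closedBall.2 hx)), hGx, by rw [← dist_eq_norm]; linarith⟩

theorem stmt12_general {n m : ℕ} (S : Set (EuclideanSpace ℝ (Fin n)))
    (sbar : EuclideanSpace ℝ (Fin n))
    (K : Set (EuclideanSpace ℝ (Fin m)))
    (U : Set (EuclideanSpace ℝ (Fin n))) (hU : IsOpen U) (hsbarU : sbar ∈ U)
    (G : EuclideanSpace ℝ (Fin n) → EuclideanSpace ℝ (Fin m))
    (G' : EuclideanSpace ℝ (Fin n) → (EuclideanSpace ℝ (Fin n) →L[ℝ] EuclideanSpace ℝ (Fin m)))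
    (G'' : EuclideanSpace ℝ (Fin n) →
      (EuclideanSpace ℝ (Fin n) →L[ℝ] EuclideanSpace ℝ (Fin n) →L[ℝ] EuclideanSpace ℝ (Fin m)))
    (hG' : ∀ x ∈ U, HasFDerivAt G (G' x) x)
    (hG'' : ∀ x ∈ U, HasFDerivAt G' (G'' x) x)
    (hG''cont : ContinuousOn G'' U)
    (hsurj : Function.Surjective (G' sbar))
    (hSrep : S ∩ U = {s ∈ U | G s ∈ K}) :
    (∀ sk : ℕ → EuclideanSpace ℝ (Fin n), (∀ k, sk k ∈ S) → Tendsto sk atTop (𝓝 sbar) →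
      PKConv (fun k => (LinearMap.ker (G' (sk k) : EuclideanSpace ℝ (Fin n) →ₗ[ℝ] EuclideanSpace ℝ (Fin m)) : Set (EuclideanSpace ℝ (Fin n))))
        (LinearMap.ker (G' sbar : EuclideanSpace ℝ (Fin n) →ₗ[ℝ] EuclideanSpace ℝ (Fin m)) : Set (EuclideanSpace ℝ (Fin n)))) ∧
    (∃ δ > (0 : ℝ), ∃ M > (0 : ℝ), ∃ V ∈ 𝓝 sbar,
      ∀ s ∈ S ∩ V, ∀ v : EuclideanSpace ℝ (Fin n), v ∈ LinearMap.ker (G' s : EuclideanSpace ℝ (Fin n) →ₗ[ℝ] EuclideanSpace ℝ (Fin m)) → ‖v‖ = 1 →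
        ∃ r : ℝ → EuclideanSpace ℝ (Fin n),
          ∀ t ∈ Set.Icc (0 : ℝ) δ, ‖r t‖ ≤ M ∧ s + t • v + (t ^ 2 / 2) • r t ∈ S) := by
  have hUsbar : U ∈ 𝓝 sbar := hU.mem_nhds hsbarU
  refine ⟨fun sk _ hsk =>
    pkConv_ker_of_tendsto ((hG'' sbar hsbarU).continuousAt.tendsto.comp hsk) hsurj, ?_⟩
  obtain ⟨C, V, hV, hlip⟩ :=
    (contDiffAt_one_iff.2 ⟨G'', U, hUsbar, hG''cont, hG''⟩).exists_lipschitzOnWith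
  obtain ⟨δ, hδ, M, hM, W, hW, hlift⟩ := exists_eq_near_add_smul_of_mem_ker
    (inter_mem hUsbar hV) (fun x hx => hG' x hx.1) (hlip.mono inter_subset_right) hsurj
  have hmemS : ∀ x ∈ U, x ∈ S ↔ G x ∈ K := fun x hx => by
    simpa [hx] using Set.ext_iff.1 hSrep x
  refine ⟨δ, hδ, 2 * M, by positivity, W ∩ U, inter_mem hW hUsbar, ?_⟩
  rintro s ⟨hsS, hsW, hsU⟩ v hv hv1
  refine exists_remainder_of_norm_le_mul_sq hM.le fun t ht => ?_
  obtain ⟨x, ⟨hxU, -⟩, hGx, hx⟩ := hlift s hsW v hv hv1.le t ht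
  exact ⟨x, (hmemS x hxU).2 (hGx ▸ (hmemS s hsU).1 hsS), hx⟩

theorem stmt12 {n m : ℕ} (S : Set (EuclideanSpace ℝ (Fin n)))
    (sbar : EuclideanSpace ℝ (Fin n)) (hsbar : sbar ∈ S)
    (K : Set (EuclideanSpace ℝ (Fin m))) (hKc : IsClosed K) (hKconv : Convex ℝ K)
    (U : Set (EuclideanSpace ℝ (Fin n))) (hU : IsOpen U) (hsbarU : sbar ∈ U)
    (G : EuclideanSpace ℝ (Fin n) → EuclideanSpace ℝ (Fin m))
    (G' : EuclideanSpace ℝ (Fin n) → (EuclideanSpace ℝ (Fin n) →L[ℝ] EuclideanSpace ℝ (Fin m)))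
    (G'' : EuclideanSpace ℝ (Fin n) →
      (EuclideanSpace ℝ (Fin n) →L[ℝ] EuclideanSpace ℝ (Fin n) →L[ℝ] EuclideanSpace ℝ (Fin m)))
    (hG' : ∀ x ∈ U, HasFDerivAt G (G' x) x)
    (hG'' : ∀ x ∈ U, HasFDerivAt G' (G'' x) x)
    (hG''cont : ContinuousOn G'' U)
    (hpointed : tangentConeSet K (G sbar) ∩ (-(tangentConeSet K (G sbar))) = {0})
    (hsurj : Function.Surjective (G' sbar))
    (hSrep : S ∩ U = {s ∈ U | G s ∈ K}) :
    (∀ sk : ℕ → EuclideanSpace ℝ (Fin n), (∀ k, sk k ∈ S) → Tendsto sk atTop (𝓝 sbar) →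
      PKConv (fun k => (LinearMap.ker (G' (sk k) : EuclideanSpace ℝ (Fin n) →ₗ[ℝ] EuclideanSpace ℝ (Fin m)) : Set (EuclideanSpace ℝ (Fin n))))
        (LinearMap.ker (G' sbar : EuclideanSpace ℝ (Fin n) →ₗ[ℝ] EuclideanSpace ℝ (Fin m)) : Set (EuclideanSpace ℝ (Fin n)))) ∧
    (∃ δ > (0 : ℝ), ∃ M > (0 : ℝ), ∃ V ∈ 𝓝 sbar,
      ∀ s ∈ S ∩ V, ∀ v : EuclideanSpace ℝ (Fin n), v ∈ LinearMap.ker (G' s : EuclideanSpace ℝ (Fin n) →ₗ[ℝ] EuclideanSpace ℝ (Fin m)) → ‖v‖ = 1 →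
        ∃ r : ℝ → EuclideanSpace ℝ (Fin n),
          ∀ t ∈ Set.Icc (0 : ℝ) δ, ‖r t‖ ≤ M ∧ s + t • v + (t ^ 2 / 2) • r t ∈ S) :=
  stmt12_general S sbar K U hU hsbarU G G' G'' hG' hG'' hG''cont hsurj hSrep
end

section
/- Let N ⊆ ℝ^m be a nonempty closed convex cone and let A : ℝⁿ → ℝ^m be a linear map such that {Ah − v : h ∈ ℝⁿ, v ∈ N} = ℝ^m. Then A⁻¹(aff N) = aff(A⁻¹(N)). -/
theorem stmt13 {n m : ℕ} (N : Set (EuclideanSpace ℝ (Fin m)))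
    (hNne : N.Nonempty) (hNc : IsClosed N) (hNconv : Convex ℝ N)
    (hNcone : ∀ c : ℝ, 0 ≤ c → ∀ x ∈ N, c • x ∈ N)
    (A : EuclideanSpace ℝ (Fin n) →L[ℝ] EuclideanSpace ℝ (Fin m))
    (hCQ : {z | ∃ h, ∃ v ∈ N, z = A h - v} = Set.univ) :
    A ⁻¹' (affineSpan ℝ N : Set (EuclideanSpace ℝ (Fin m))) =
      (affineSpan ℝ (A ⁻¹' N) : Set (EuclideanSpace ℝ (Fin n))) := by
  -- 0 ∈ N
  obtain ⟨x0, hx0⟩ := hNne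
  have h0N : (0 : EuclideanSpace ℝ (Fin m)) ∈ N := by
    have := hNcone 0 le_rfl x0 hx0
    simpa using this
  have h0P : (0 : EuclideanSpace ℝ (Fin n)) ∈ A ⁻¹' N := by
    simp [Set.mem_preimage, h0N]
  -- N is closed under addition
  have hadd : ∀ u ∈ N, ∀ v ∈ N, u + v ∈ N := by
    intro u hu v hv
    have h := hNconv hu hv (a := 1/2) (b := 1/2) (by norm_num) (by norm_num) (by norm_num)
    have := hNcone 2 (by norm_num) _ h
    have heq : (2 : ℝ) • ((1/2 : ℝ) • u + (1/2 : ℝ) • v) = u + v := by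
      rw [smul_add, smul_smul, smul_smul]; norm_num
    rwa [heq] at this
  -- rewrite affine spans as linear spans
  have hspanN : (affineSpan ℝ N : Set (EuclideanSpace ℝ (Fin m)))
      = (Submodule.span ℝ N : Set (EuclideanSpace ℝ (Fin m))) := by
    rw [← affineSpan_insert_zero, Set.insert_eq_of_mem h0N]
  have hspanP : (affineSpan ℝ (A ⁻¹' N) : Set (EuclideanSpace ℝ (Fin n)))
      = (Submodule.span ℝ (A ⁻¹' N) : Set (EuclideanSpace ℝ (Fin n))) := by
    rw [← affineSpan_insert_zero, Set.insert_eq_of_mem h0P]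
  rw [hspanN, hspanP]
  ext x
  simp only [Set.mem_preimage, SetLike.mem_coe]
  constructor
  · intro hx
    -- A x ∈ span N = N - N
    have hx' : A x ∈ {z | ∃ u ∈ N, ∃ v ∈ N, z = u - v} := by
      have hsub : (Submodule.span ℝ N : Set _) ⊆ {z | ∃ u ∈ N, ∃ v ∈ N, z = u - v} := by
        intro z hz
        induction hz using Submodule.span_induction with
        | mem w hw => exact ⟨w, hw, 0, h0N, by simp⟩
        | zero => exact ⟨0, h0N, 0, h0N, by simp⟩
        | add a b _ _ ha hb =>
          obtain ⟨u1, hu1, v1, hv1, rfl⟩ := ha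
          obtain ⟨u2, hu2, v2, hv2, rfl⟩ := hb
          exact ⟨u1 + u2, hadd _ hu1 _ hu2, v1 + v2, hadd _ hv1 _ hv2, by abel⟩
        | smul c a _ ha =>
          obtain ⟨u, hu, v, hv, rfl⟩ := ha
          rcases le_or_gt 0 c with hc | hc
          · exact ⟨c • u, hNcone c hc u hu, c • v, hNcone c hc v hv, by rw [smul_sub]⟩
          · refine ⟨(-c) • v, hNcone (-c) (by linarith) v hv,
              (-c) • u, hNcone (-c) (by linarith) u hu, ?_⟩
            rw [smul_sub]; module
      exact hsub hx
    obtain ⟨u, hu, v, hv, huv⟩ := hx'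
    -- get h with A h = v + w, w ∈ N
    have hv' : v ∈ {z | ∃ h, ∃ v ∈ N, z = A h - v} := by rw [hCQ]; trivial
    obtain ⟨h, w, hw, hhw⟩ := hv'
    have hAh : A h = v + w := by rw [eq_sub_iff_add_eq] at hhw; rw [← hhw]
    have h1 : h ∈ A ⁻¹' N := by
      simp only [Set.mem_preimage, hAh]
      exact hadd _ hv _ hw
    have h2 : h + x ∈ A ⁻¹' N := by
      simp only [Set.mem_preimage, map_add, hAh, huv]
      have : v + w + (u - v) = w + u := by abel
      rw [this]
      exact hadd _ hw _ hu
    have : x = (h + x) - h := by abel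
    rw [this]
    exact Submodule.sub_mem _ (Submodule.subset_span h2) (Submodule.subset_span h1)
  · intro hx
    induction hx using Submodule.span_induction with
    | mem w hw => exact Submodule.subset_span hw
    | zero => simp
    | add a b _ _ ha hb => rw [map_add]; exact Submodule.add_mem _ ha hb
    | smul c a _ ha => rw [map_smul]; exact Submodule.smul_mem _ c ha
end
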